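/- arXiv:1902.08837 — 2 statements merged into one kernel-verified Lean document; each statement's English description precedes it below -/
import Mathlib

section
/- (Connell's identity) For every natural number x ≥ 1, f(f(x) + x) = 2·f(x) + x; that is, ⌊φ·(⌊φ·x⌋ + x)⌋ = 2·⌊φ·x⌋ + x. -/
/-! Write `φ n = ⌊φ n⌋ + θ` with `0 ≤ θ < 1`. Since `φ² = φ + 1`, the number `φ (⌊φ n⌋ + n)`
exceeds the integer `2 ⌊φ n⌋ + n` by exactly `(2 - φ) θ`, which lies in `[0, 1)` because
`1 < φ < 2`. -/

noncomputable def phi : ℝ := (1 + Real.sqrt 5) / 2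

noncomputable def f (n : ℕ) : ℕ := ⌊phi * n⌋₊

open Real goldenRatio

lemma phi_eq_goldenRatio : phi = φ := rfl

lemma goldenRatio_mul_add (m y : ℝ) : φ * (m + y) = 2 * m + y + (2 - φ) * (φ * y - m) := by
  linear_combination y * goldenRatio_sq

lemma floor_goldenRatio_mul_floor_add (n : ℕ) :
    ⌊φ * (⌊φ * n⌋₊ + n)⌋₊ = 2 * ⌊φ * n⌋₊ + n := by
  set m := ⌊φ * n⌋₊
  have hm : (m : ℝ) ≤ φ * n := Nat.floor_le (by positivity)
  have hm' : φ * n < m + 1 := Nat.lt_floor_add_one _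
  have h2φ : 0 < 2 - φ := sub_pos.mpr goldenRatio_lt_two
  have hexcess_nonneg : 0 ≤ (2 - φ) * (φ * n - m) := by
    apply mul_nonneg h2φ.le; linarith
  have hexcess_lt_one : (2 - φ) * (φ * n - m) < 1 := by
    nlinarith [one_lt_goldenRatio]
  rw [goldenRatio_mul_add, Nat.floor_eq_iff (by positivity)]
  push_cast
  constructor <;> linarith

theorem connell_general (x : ℕ) : f (f x + x) = 2 * f x + x := by
  simp only [f, Nat.cast_add, phi_eq_goldenRatio]
  exact floor_goldenRatio_mul_floor_add x

theorem connell (x : ℕ) (hx : 1 ≤ x) : f (f x + x) = 2 * f x + x :=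
  connell_general x
end

section
/- Let S be a nonempty finite set of natural numbers, each of whose elements is ≥ 2, containing no two consecutive integers (i.e. if i ∈ S then i+1 ∉ S), whose minimum element is even, and let n = ∑_{i∈S} fib(i). Then n = f(x) for x = ∑_{i∈S} fib(i−1). -/
noncomputable def psi : ℝ := (1 - Real.sqrt 5) / 2

noncomputable def bb : ℝ := (Real.sqrt 5 - 1) / 2

lemma sqrt5_sq : Real.sqrt 5 ^ 2 = 5 := Real.sq_sqrt (by norm_num)

lemma sqrt5_lt : Real.sqrt 5 < 3 := by
  nlinarith [Real.sq_sqrt (show (0:ℝ) ≤ 5 by norm_num), Real.sqrt_nonneg 5]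

lemma sqrt5_gt : 2 < Real.sqrt 5 := by
  nlinarith [Real.sq_sqrt (show (0:ℝ) ≤ 5 by norm_num), Real.sqrt_nonneg 5]

lemma bb_pos : 0 < bb := by unfold bb; linarith [sqrt5_gt]

lemma bb_lt_one : bb < 1 := by unfold bb; linarith [sqrt5_lt]

lemma bb_eq : bb + bb ^ 2 = 1 := by unfold bb; linear_combination sqrt5_sq / 4

lemma psi_eq : psi = -bb := by unfold psi bb; ring

lemma psi_sq : psi ^ 2 = psi + 1 := by unfold psi; linear_combination sqrt5_sq / 4

lemma phi_mul_fib : ∀ k : ℕ, phi * Nat.fib k = Nat.fib (k + 1) - psi ^ k := by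
  intro k
  induction k using Nat.twoStepInduction with
  | zero => simp [phi]
  | one => unfold phi psi; norm_num; ring
  | more k ih1 ih2 =>
    have h1 : (Nat.fib (k + 2) : ℝ) = Nat.fib k + Nat.fib (k + 1) := by
      rw [Nat.fib_add_two]; push_cast; ring
    have h2 : (Nat.fib (k + 3) : ℝ) = Nat.fib (k + 1) + Nat.fib (k + 2) := by
      rw [show k + 3 = (k + 1) + 2 from rfl, Nat.fib_add_two]; push_cast; ring
    have : psi ^ (k + 2) = psi ^ k * (psi + 1) := by
      rw [← psi_sq]; ring
    rw [h1, h2, mul_add, ih1, ih2, this]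
    ring

/-- Key bound: a spaced sum of ψ^(i-1) powers with all indices ≥ a is < bb^(a-2) in abs. -/
lemma spaced_bound : ∀ (T : Finset ℕ) (a : ℕ), 2 ≤ a → (∀ i ∈ T, a ≤ i) →
    (∀ i ∈ T, i + 1 ∉ T) → |∑ i ∈ T, psi ^ (i - 1)| < bb ^ (a - 2) := by
  intro T
  induction T using Finset.strongInduction with
  | _ T ih =>
    intro a ha hge hcons
    rcases T.eq_empty_or_nonempty with rfl | hne
    · simpa using pow_pos bb_pos (a - 2)
    · set m := T.min' hne with hmdef
      have hmT : m ∈ T := T.min'_mem hne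
      have hma : a ≤ m := hge m hmT
      have hkey : ∀ i ∈ T.erase m, m + 2 ≤ i := by
        intro i hi
        have hiT := Finset.mem_of_mem_erase hi
        have hge' : m ≤ i := T.min'_le i hiT
        have hne' : i ≠ m := Finset.ne_of_mem_erase hi
        have : i ≠ m + 1 := by
          rintro rfl
          exact hcons m hmT hiT
        omega
      have hcons' : ∀ i ∈ T.erase m, i + 1 ∉ T.erase m := by
        intro i hi h
        exact hcons i (Finset.mem_of_mem_erase hi) (Finset.mem_of_mem_erase h)
      have ih' := ih (T.erase m) (Finset.erase_ssubset hmT) (m + 2) (by omega) hkey hcons'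
      have hsplit : ∑ i ∈ T, psi ^ (i - 1)
          = psi ^ (m - 1) + ∑ i ∈ T.erase m, psi ^ (i - 1) :=
        (Finset.add_sum_erase T _ hmT).symm
      have habs : |psi ^ (m - 1)| = bb ^ (m - 1) := by
        rw [psi_eq, abs_pow, abs_neg, abs_of_pos bb_pos]
      have hsum : bb ^ (m - 1) + bb ^ m = bb ^ (m - 2) := by
        have h := bb_eq
        have e : bb ^ ((m - 2) + 1) + bb ^ ((m - 2) + 2) = bb ^ (m - 2) := by
          linear_combination bb ^ (m - 2) * h
        rwa [show (m - 2) + 1 = m - 1 by omega, show (m - 2) + 2 = m by omega] at e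
      have hmono : bb ^ (m - 2) ≤ bb ^ (a - 2) :=
        pow_le_pow_of_le_one bb_pos.le bb_lt_one.le (by omega)
      have h2' : (m + 2) - 2 = m := by omega
      rw [h2'] at ih'
      calc |∑ i ∈ T, psi ^ (i - 1)|
          ≤ |psi ^ (m - 1)| + |∑ i ∈ T.erase m, psi ^ (i - 1)| := by
            rw [hsplit]; exact abs_add_le _ _
        _ < bb ^ (m - 1) + bb ^ m := by rw [habs]; linarith
        _ ≤ bb ^ (a - 2) := by rw [hsum] at *; exact hmono

theorem zeckendorf_preimage (S : Finset ℕ) (hS : S.Nonempty)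
    (h2 : ∀ i ∈ S, 2 ≤ i) (hcons : ∀ i ∈ S, i + 1 ∉ S)
    (heven : Even (S.min' hS))
    (n : ℕ) (hn : n = ∑ i ∈ S, Nat.fib i) :
    n = f (∑ i ∈ S, Nat.fib (i - 1)) := by
  set m := S.min' hS with hmdef
  have hmS : m ∈ S := S.min'_mem hS
  have hm2 : 2 ≤ m := h2 m hmS
  obtain ⟨k, hk⟩ := heven
  have hk1 : 1 ≤ k := by omega
  -- the main identity: phi * x = n - t
  have hx : phi * (∑ i ∈ S, Nat.fib (i - 1) : ℕ)
      = (n : ℝ) - ∑ i ∈ S, psi ^ (i - 1) := by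
    rw [hn]
    push_cast
    rw [Finset.mul_sum, ← Finset.sum_sub_distrib]
    apply Finset.sum_congr rfl
    intro i hi
    have h2i := h2 i hi
    have := phi_mul_fib (i - 1)
    rwa [show i - 1 + 1 = i by omega] at this
  -- bounds on t
  have hkey : ∀ i ∈ S.erase m, m + 2 ≤ i := by
    intro i hi
    have hiT := Finset.mem_of_mem_erase hi
    have hge' : m ≤ i := S.min'_le i hiT
    have hne' : i ≠ m := Finset.ne_of_mem_erase hi
    have : i ≠ m + 1 := by rintro rfl; exact hcons m hmS hiT
    omega
  have hcons' : ∀ i ∈ S.erase m, i + 1 ∉ S.erase m := by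
    intro i hi h
    exact hcons i (Finset.mem_of_mem_erase hi) (Finset.mem_of_mem_erase h)
  have hbnd := spaced_bound (S.erase m) (m + 2) (by omega) hkey hcons'
  rw [show (m + 2) - 2 = m by omega] at hbnd
  have hsplit : ∑ i ∈ S, psi ^ (i - 1)
      = psi ^ (m - 1) + ∑ i ∈ S.erase m, psi ^ (i - 1) :=
    (Finset.add_sum_erase S _ hmS).symm
  have hodd : Odd (m - 1) := ⟨k - 1, by omega⟩
  have hpsipow : psi ^ (m - 1) = -(bb ^ (m - 1)) := by
    rw [psi_eq, hodd.neg_pow]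
  have hsum : bb ^ (m - 1) + bb ^ m = bb ^ (m - 2) := by
    have h := bb_eq
    have e : bb ^ ((m - 2) + 1) + bb ^ ((m - 2) + 2) = bb ^ (m - 2) := by
      linear_combination bb ^ (m - 2) * h
    rwa [show (m - 2) + 1 = m - 1 by omega, show (m - 2) + 2 = m by omega] at e
  have hbm : bb ^ m < bb ^ (m - 1) :=
    pow_lt_pow_right_of_lt_one₀ bb_pos bb_lt_one (by omega)
  have hbm2 : bb ^ (m - 2) ≤ 1 := pow_le_one₀ bb_pos.le bb_lt_one.le
  have habs := abs_lt.mp hbnd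
  have ht_le : ∑ i ∈ S, psi ^ (i - 1) ≤ 0 := by
    rw [hsplit, hpsipow]; linarith [habs.2]
  have ht_gt : (-1 : ℝ) < ∑ i ∈ S, psi ^ (i - 1) := by
    rw [hsplit, hpsipow]; linarith [habs.1]
  -- conclude
  symm
  unfold f
  rw [Nat.floor_eq_iff (by rw [hx]; linarith)]
  constructor
  · rw [hx]; linarith
  · rw [hx]; linarith
end
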